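/- Consider a finite discounted MDP with state set S, action set A, kernel P, reward r, and discount γ ∈ [0,1), together with a regularizer φ satisfying Assumption 2 and λ ≥ 0. Let V* be the unique fixed point of the unregularized Bellman operator T and V*_λ the unique fixed point of the regularized Bellman operator T_λ. Then for every state s: V*(s) ≤ V*_λ(s) ≤ V*(s) + (λ/(1−γ))·φ(1/|A|); in particular ‖V*_λ − V*‖_∞ ≤ (λ/(1−γ))·φ(1/|A|). -/

import Mathlib

open Filter

/-- A regularizer: on the interval (0,1], φ is nonincreasing, φ(1) = 0,
φ is differentiable, and `x ↦ x·φ(x)` is strictly concave. -/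
def IsRegularizer (φ : ℝ → ℝ) : Prop :=
  AntitoneOn φ (Set.Ioc 0 1) ∧ φ 1 = 0 ∧ DifferentiableOn ℝ φ (Set.Ioc 0 1) ∧
    StrictConcaveOn ℝ (Set.Ioc 0 1) (fun x => x * φ x)

/-- Assumption 2: `x·φ(x) → 0` as `x → 0⁺`. -/
def Assumption2 (φ : ℝ → ℝ) : Prop :=
  Tendsto (fun x => x * φ x) (nhdsWithin 0 (Set.Ioi 0)) (nhds 0)

/-- The regularized Bellman operator `T_λ`:
`(T_λ V) s = sup_{p ∈ Δ_A} ∑ a, (p a * (r s a + γ ∑ s', P s a s' * V s') + λ * f_φ(p a))`,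
where `f_φ(x) = x * φ x` (so `f_φ(0) = 0` automatically). -/
noncomputable def Treg {S A : Type*} [Fintype S] [Fintype A]
    (P : S → A → S → ℝ) (r : S → A → ℝ) (γ : ℝ) (φ : ℝ → ℝ) (lam : ℝ)
    (V : S → ℝ) (s : S) : ℝ :=
  sSup ((fun p : A → ℝ =>
      ∑ a, (p a * (r s a + γ * ∑ s', P s a s' * V s') + lam * (p a * φ (p a)))) ''
    {p | (∀ a, 0 ≤ p a) ∧ ∑ a, p a = 1})

/-!
The regularization term `∑ₐ p a · φ (p a)` lies between `0` and `φ (1/|A|)` on the simplex: it is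
nonnegative because `φ ≥ φ 1 = 0`, and by Jensen's inequality for the concave map `x ↦ x φ x` it
is maximal at the uniform distribution. Hence `T ≤ T_λ ≤ T + λ φ (1/|A|)` pointwise. Both
operators are monotone `γ`-contractions in the sense that `V ≤ W + M` gives
`T_λ V ≤ T_λ W + γ M`; evaluating at a state where `V - W` is maximal turns the comparison of
the two operators into the comparison of their fixed points, losing the factor `1/(1-γ)`.
-/

open Finset

theorem csSup_image_le_csSup_image_add {α : Type*} {s : Set α} {f g : α → ℝ} {c : ℝ}
    (hs : s.Nonempty) (hg : BddAbove (g '' s)) (h : ∀ x ∈ s, f x ≤ g x + c) :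
    sSup (f '' s) ≤ sSup (g '' s) + c :=
  csSup_le (hs.image f) <| by
    rintro _ ⟨x, hx, rfl⟩
    linarith [h x hx, le_csSup hg ⟨x, hx, rfl⟩]

theorem le_add_div_one_sub_of_le_add_mul {S : Type*} [Finite S] [Nonempty S] {V W : S → ℝ}
    {γ c : ℝ} (hγ : γ < 1) (h : ∀ M, (∀ s, V s ≤ W s + M) → ∀ s, V s ≤ W s + γ * M + c)
    (s : S) : V s ≤ W s + c / (1 - γ) := by
  obtain ⟨s₀, hs₀⟩ := Finite.exists_max fun s => V s - W s
  have hs₀' := h (V s₀ - W s₀) (fun s => by linarith [hs₀ s]) s₀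
  have hgap : V s₀ - W s₀ ≤ c / (1 - γ) := by
    rw [le_div_iff₀ (sub_pos.2 hγ)]
    linarith
  linarith [hs₀ s]

namespace IsRegularizer

variable {φ : ℝ → ℝ}

theorem mul_mul_apply_le (hφ : IsRegularizer φ) {t y : ℝ} (ht₀ : 0 ≤ t) (ht₁ : t ≤ 1)
    (hy₀ : 0 ≤ y) (hy₁ : y ≤ 1) : t * (y * φ y) ≤ t * y * φ (t * y) := by
  rw [← mul_assoc]
  rcases (mul_nonneg ht₀ hy₀).eq_or_lt with hty | hty
  · simp [← hty]
  have hy : 0 < y := pos_of_mul_pos_right hty ht₀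
  exact mul_le_mul_of_nonneg_left
    (hφ.1 ⟨hty, mul_le_one₀ ht₁ hy₀ hy₁⟩ ⟨hy, hy₁⟩ (mul_le_of_le_one_left hy₀ ht₁)) hty.le

theorem mul_apply_self_nonneg (hφ : IsRegularizer φ) {x : ℝ} (hx₀ : 0 ≤ x) (hx₁ : x ≤ 1) :
    0 ≤ x * φ x := by
  simpa [hφ.2.1] using hφ.mul_mul_apply_le hx₀ hx₁ zero_le_one le_rfl

/-- Setting `f_φ 0 = 0` keeps `f_φ` concave, since `t f_φ(y) ≤ f_φ(t y)` by antitonicity of `φ`. -/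
theorem concaveOn_Icc (hφ : IsRegularizer φ) :
    ConcaveOn ℝ (Set.Icc 0 1) (fun x => x * φ x) := by
  refine ⟨convex_Icc 0 1, fun x hx y hy a b ha hb hab => ?_⟩
  rcases hx.1.eq_or_lt with rfl | hx₀
  · simpa using hφ.mul_mul_apply_le hb (by linarith) hy.1 hy.2
  rcases hy.1.eq_or_lt with rfl | hy₀
  · simpa using hφ.mul_mul_apply_le ha (by linarith) hx.1 hx.2
  exact hφ.2.2.2.concaveOn.2 ⟨hx₀, hx.2⟩ ⟨hy₀, hy.2⟩ ha hb hab

theorem sum_mul_apply_le {A : Type*} [Fintype A] (hφ : IsRegularizer φ) {p : A → ℝ}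
    (hp : p ∈ stdSimplex ℝ A) : ∑ a, p a * φ (p a) ≤ φ (1 / Fintype.card A) := by
  have hA : (0 : ℝ) < Fintype.card A := by
    obtain ⟨a, -⟩ := nonempty_of_sum_ne_zero (hp.2.trans_ne one_ne_zero)
    exact_mod_cast Fintype.card_pos_iff.2 ⟨a⟩
  have hjensen := hφ.concaveOn_Icc.le_map_sum (t := univ) (w := fun _ => 1 / (Fintype.card A : ℝ))
    (fun _ _ => by positivity) (by simp [hA.ne']) (fun a _ => mem_Icc_of_mem_stdSimplex hp a)
  simp only [smul_eq_mul, ← mul_sum, hp.2, mul_one] at hjensen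
  exact le_of_mul_le_mul_left hjensen (by positivity)

end IsRegularizer

section regObjective

variable {A : Type*} [Fintype A] {φ : ℝ → ℝ} {lam : ℝ} {q q' p : A → ℝ}

/-- `Treg P r γ φ lam V s` is, by definition, the supremum of
`regObjective φ lam (bellmanQ P r γ V s)` over `stdSimplex ℝ A`. -/
def regObjective (φ : ℝ → ℝ) (lam : ℝ) (q p : A → ℝ) : ℝ :=
  ∑ a, (p a * q a + lam * (p a * φ (p a)))

theorem regObjective_le_add {c : ℝ} (hp : p ∈ stdSimplex ℝ A) (h : ∀ a, q a ≤ q' a + c) :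
    regObjective φ lam q p ≤ regObjective φ lam q' p + c :=
  calc regObjective φ lam q p ≤ ∑ a, (p a * (q' a + c) + lam * (p a * φ (p a))) :=
        sum_le_sum fun a _ => by gcongr; exacts [hp.1 a, h a]
    _ = regObjective φ lam q' p + (∑ a, p a) * c := by
        simp only [regObjective, mul_add, add_right_comm _ (p _ * c), sum_add_distrib, sum_mul]
    _ = regObjective φ lam q' p + c := by rw [hp.2, one_mul]

theorem regObjective_zero_le (hφ : IsRegularizer φ) (hlam : 0 ≤ lam) (hp : p ∈ stdSimplex ℝ A) :
    regObjective φ 0 q p ≤ regObjective φ lam q p :=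
  sum_le_sum fun a _ => by
    obtain ⟨hpa₀, hpa₁⟩ := mem_Icc_of_mem_stdSimplex hp a
    simpa using mul_nonneg hlam (hφ.mul_apply_self_nonneg hpa₀ hpa₁)

theorem regObjective_le_zero_add (hφ : IsRegularizer φ) (hlam : 0 ≤ lam)
    (hp : p ∈ stdSimplex ℝ A) :
    regObjective φ lam q p ≤ regObjective φ 0 q p + lam * φ (1 / Fintype.card A) := by
  have hsplit : regObjective φ lam q p = regObjective φ 0 q p + lam * ∑ a, p a * φ (p a) := by
    simp [regObjective, sum_add_distrib, mul_sum]
  rw [hsplit]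
  gcongr
  exact hφ.sum_mul_apply_le hp

theorem bddAbove_regObjective (hφ : IsRegularizer φ) (hlam : 0 ≤ lam) (q : A → ℝ) :
    BddAbove (regObjective φ lam q '' stdSimplex ℝ A) := by
  obtain ⟨m, hm⟩ := (Set.finite_range q).bddAbove
  refine ⟨m + lam * φ (1 / Fintype.card A), ?_⟩
  rintro _ ⟨p, hp, rfl⟩
  have hq : regObjective φ 0 q p ≤ regObjective φ 0 0 p + m :=
    regObjective_le_add hp fun a => by simpa using hm ⟨a, rfl⟩
  have hzero : regObjective φ 0 (0 : A → ℝ) p = 0 := by simp [regObjective]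
  linarith [regObjective_le_zero_add (q := q) hφ hlam hp]

end regObjective

section Bellman

variable {S A : Type*} [Fintype S] {P : S → A → S → ℝ} {r : S → A → ℝ} {γ : ℝ}

def bellmanQ (P : S → A → S → ℝ) (r : S → A → ℝ) (γ : ℝ) (V : S → ℝ) (s : S) (a : A) : ℝ :=
  r s a + γ * ∑ s', P s a s' * V s'

theorem bellmanQ_le_add (hP : ∀ s a s', 0 ≤ P s a s') (hPsum : ∀ s a, ∑ s', P s a s' = 1)
    (hγ : 0 ≤ γ) {V W : S → ℝ} {M : ℝ} (h : ∀ s, V s ≤ W s + M) (s : S) (a : A) :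
    bellmanQ P r γ V s a ≤ bellmanQ P r γ W s a + γ * M := by
  have hPV : ∑ s', P s a s' * V s' ≤ ∑ s', P s a s' * W s' + M :=
    calc ∑ s', P s a s' * V s' ≤ ∑ s', P s a s' * (W s' + M) :=
          sum_le_sum fun s' _ => mul_le_mul_of_nonneg_left (h s') (hP s a s')
      _ = ∑ s', P s a s' * W s' + M := by
          simp only [mul_add, sum_add_distrib, ← sum_mul, hPsum, one_mul]
  simp only [bellmanQ]
  nlinarith [mul_le_mul_of_nonneg_left hPV hγ]

variable [Fintype A] [Nonempty A] {φ : ℝ → ℝ} {lam : ℝ}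

theorem stdSimplex_nonempty : (stdSimplex ℝ A).Nonempty := by
  classical
  exact ⟨_, single_mem_stdSimplex ℝ (Classical.arbitrary A)⟩

theorem Treg_le_add (hP : ∀ s a s', 0 ≤ P s a s') (hPsum : ∀ s a, ∑ s', P s a s' = 1)
    (hγ : 0 ≤ γ) (hφ : IsRegularizer φ) (hlam : 0 ≤ lam) {V W : S → ℝ} {M : ℝ}
    (h : ∀ s, V s ≤ W s + M) (s : S) :
    Treg P r γ φ lam V s ≤ Treg P r γ φ lam W s + γ * M :=
  csSup_image_le_csSup_image_add stdSimplex_nonempty (bddAbove_regObjective hφ hlam _)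
    fun _ hp => regObjective_le_add hp (bellmanQ_le_add hP hPsum hγ h s)

theorem Treg_zero_le (hφ : IsRegularizer φ) (hlam : 0 ≤ lam) (V : S → ℝ) (s : S) :
    Treg P r γ φ 0 V s ≤ Treg P r γ φ lam V s :=
  (csSup_image_le_csSup_image_add (c := 0) stdSimplex_nonempty (bddAbove_regObjective hφ hlam _)
    fun _ hp => (regObjective_zero_le hφ hlam hp).trans_eq (add_zero _).symm).trans_eq
      (add_zero _)

theorem Treg_le_Treg_zero_add (hφ : IsRegularizer φ) (hlam : 0 ≤ lam) (V : S → ℝ) (s : S) :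
    Treg P r γ φ lam V s ≤ Treg P r γ φ 0 V s + lam * φ (1 / Fintype.card A) :=
  csSup_image_le_csSup_image_add stdSimplex_nonempty (bddAbove_regObjective hφ le_rfl _)
    fun _ hp => regObjective_le_zero_add hφ hlam hp

end Bellman

theorem Treg_performance_error_general (S A : Type*) [Fintype S] [Fintype A] [Nonempty S] [Nonempty A]
    (P : S → A → S → ℝ) (hP : ∀ s a s', 0 ≤ P s a s')
    (hPsum : ∀ s a, ∑ s', P s a s' = 1)
    (r : S → A → ℝ) (γ : ℝ) (hγ0 : 0 ≤ γ) (hγ1 : γ < 1)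
    (φ : ℝ → ℝ) (hφ : IsRegularizer φ)
    (lam : ℝ) (hlam : 0 ≤ lam)
    (Vstar Vlam : S → ℝ)
    (hVstar : Treg P r γ φ 0 Vstar = Vstar)
    (hVlam : Treg P r γ φ lam Vlam = Vlam) :
    (∀ s, Vstar s ≤ Vlam s ∧
        Vlam s ≤ Vstar s + lam / (1 - γ) * φ (1 / (Fintype.card A : ℝ))) ∧
      (⨆ s, |Vlam s - Vstar s|) ≤ lam / (1 - γ) * φ (1 / (Fintype.card A : ℝ)) := by
  have hlower (s : S) : Vstar s ≤ Vlam s := by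
    simpa using le_add_div_one_sub_of_le_add_mul (c := 0) hγ1 (fun M hM s =>
      calc Vstar s = Treg P r γ φ 0 Vstar s := (congrFun hVstar s).symm
        _ ≤ Treg P r γ φ lam Vstar s := Treg_zero_le hφ hlam Vstar s
        _ ≤ Treg P r γ φ lam Vlam s + γ * M := Treg_le_add hP hPsum hγ0 hφ hlam hM s
        _ = Vlam s + γ * M + 0 := by rw [congrFun hVlam s, add_zero]) s
  have hupper (s : S) : Vlam s ≤ Vstar s + lam / (1 - γ) * φ (1 / (Fintype.card A : ℝ)) := by
    rw [div_mul_eq_mul_div]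
    refine le_add_div_one_sub_of_le_add_mul hγ1 (fun M hM s => ?_) s
    calc Vlam s = Treg P r γ φ lam Vlam s := (congrFun hVlam s).symm
      _ ≤ Treg P r γ φ 0 Vlam s + lam * φ (1 / Fintype.card A) :=
          Treg_le_Treg_zero_add hφ hlam Vlam s
      _ ≤ Treg P r γ φ 0 Vstar s + γ * M + lam * φ (1 / Fintype.card A) := by
          gcongr
          exact Treg_le_add hP hPsum hγ0 hφ le_rfl hM s
      _ = Vstar s + γ * M + lam * φ (1 / Fintype.card A) := by rw [congrFun hVstar s]
  refine ⟨fun s => ⟨hlower s, hupper s⟩, ciSup_le fun s => ?_⟩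
  rw [abs_of_nonneg (sub_nonneg.2 (hlower s))]
  linarith [hupper s]

/-- Performance error between the optimal value `V*` (fixed point of the
unregularized Bellman operator `T = T_0`) and the regularized optimal value `V*_λ`
(fixed point of `T_λ`): `V* s ≤ V*_λ s ≤ V* s + (λ/(1−γ))·φ(1/|A|)`; in particular
`‖V*_λ − V*‖_∞ ≤ (λ/(1−γ))·φ(1/|A|)`. -/
theorem Treg_performance_error (S A : Type*) [Fintype S] [Fintype A] [Nonempty S] [Nonempty A]
    (P : S → A → S → ℝ) (hP : ∀ s a s', 0 ≤ P s a s')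
    (hPsum : ∀ s a, ∑ s', P s a s' = 1)
    (r : S → A → ℝ) (γ : ℝ) (hγ0 : 0 ≤ γ) (hγ1 : γ < 1)
    (φ : ℝ → ℝ) (hφ : IsRegularizer φ) (hA2 : Assumption2 φ)
    (lam : ℝ) (hlam : 0 ≤ lam)
    (Vstar Vlam : S → ℝ)
    (hVstar : Treg P r γ φ 0 Vstar = Vstar)
    (hVlam : Treg P r γ φ lam Vlam = Vlam) :
    (∀ s, Vstar s ≤ Vlam s ∧
        Vlam s ≤ Vstar s + lam / (1 - γ) * φ (1 / (Fintype.card A : ℝ))) ∧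
      (⨆ s, |Vlam s - Vstar s|) ≤ lam / (1 - γ) * φ (1 / (Fintype.card A : ℝ)) :=
  Treg_performance_error_general S A P hP hPsum r γ hγ0 hγ1 φ hφ lam hlam Vstar Vlam hVstar hVlam
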